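/- arXiv:2311.08500 — 2 statements merged into one kernel-verified Lean document; each statement's English description precedes it below -/
import Mathlib

section
/- Let x_0 be a random vector in ℝ^n distributed as a Gaussian mixture with components (p_i, μ_i^0, Σ_i^0), i = 0,…,r−1, where all Σ_i^0 are positive definite and p_i > 0. Suppose that, conditioned on x_0 being drawn from component i, the terminal state is x_N = H_{i,j} x_0 − h_{i,j} with probability λ_{i,j} (where ∑_j λ_{i,j} = 1, λ_{i,j} ≥ 0, and each H_{i,j} is invertible), and suppose that for every i the parameters satisfy H_{i,j} μ_i^0 − h_{i,j} = μ_j^f and H_{i,j} Σ_i^0 H_{i,j}ᵀ = Σ_j^f for all j. Then x_N is distributed as a Gaussian mixture with components (q_j, μ_j^f, Σ_j^f), j = 0,…,t−1, where q_j = ∑_{i=0}^{r−1} p_i λ_{i,j}. -/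
open Matrix MeasureTheory

noncomputable def gaussianPdf (n : ℕ) (μ : Fin n → ℝ) (S : Matrix (Fin n) (Fin n) ℝ)
    (x : Fin n → ℝ) : ℝ :=
  (2 * Real.pi) ^ (-(n : ℝ) / 2) * S.det ^ (-(1 : ℝ) / 2) *
    Real.exp (-(1 / 2) * ((x - μ) ⬝ᵥ S⁻¹.mulVec (x - μ)))

/-!
Conditioned on the labels `(i, j)`, `x₀` has law `pᵢ λᵢⱼ · N(μᵢ⁰, Σᵢ⁰)` and `x_N` is its image
under the invertible affine map `x ↦ Hᵢⱼ x - hᵢⱼ`. The image of `N(μ, Σ)` under `x ↦ H x - h` is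
`N(H μ - h, H Σ Hᵀ)`: in the change of variables the Jacobian `|det H|` cancels against the ratio
of the normalising constants. By the matching conditions this is `N(μⱼᶠ, Σⱼᶠ)` for every `i`, and
summing over the labels gives the mixture with weights `∑ᵢ pᵢ λᵢⱼ`.
-/

lemma det_mul_mul_transpose {n : Type*} [Fintype n] [DecidableEq n] {R : Type*} [CommRing R]
    (H S : Matrix n n R) : (H * S * Hᵀ).det = H.det ^ 2 * S.det := by
  rw [det_mul, det_mul, det_transpose]; ring

lemma gaussianPdf_nonneg {n : ℕ} (μ : Fin n → ℝ) {S : Matrix (Fin n) (Fin n) ℝ}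
    (hS : 0 ≤ S.det) (x : Fin n → ℝ) : 0 ≤ gaussianPdf n μ S x := by
  unfold gaussianPdf; positivity

@[fun_prop]
lemma continuous_gaussianPdf (n : ℕ) (μ : Fin n → ℝ) (S : Matrix (Fin n) (Fin n) ℝ) :
    Continuous (gaussianPdf n μ S) := by
  unfold gaussianPdf
  fun_prop

lemma gaussianPdf_affine {n : ℕ} {H : Matrix (Fin n) (Fin n) ℝ} (hH : IsUnit H.det)
    (h μ : Fin n → ℝ) {S : Matrix (Fin n) (Fin n) ℝ} (hS : 0 ≤ S.det) (x : Fin n → ℝ) :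
    gaussianPdf n (H *ᵥ μ - h) (H * S * Hᵀ) (H *ᵥ x - h) = |H.det|⁻¹ * gaussianPdf n μ S x := by
  have hdiff : H *ᵥ x - h - (H *ᵥ μ - h) = H *ᵥ (x - μ) := by
    rw [mulVec_sub]; abel
  have hquad : ∀ d : Fin n → ℝ, H *ᵥ d ⬝ᵥ (H * S * Hᵀ)⁻¹ *ᵥ (H *ᵥ d) = d ⬝ᵥ S⁻¹ *ᵥ d := by
    intro d
    have hHt : IsUnit Hᵀ.det := by rwa [det_transpose]
    rw [Matrix.mul_inv_rev, Matrix.mul_inv_rev, mulVec_mulVec, Matrix.mul_assoc, Matrix.mul_assoc,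
      nonsing_inv_mul _ hH, Matrix.mul_one, ← mulVec_mulVec, dotProduct_mulVec,
      ← vecMul_transpose, vecMul_vecMul, mul_nonsing_inv _ hHt, vecMul_one, dotProduct_mulVec]
  have hdet : (H * S * Hᵀ).det ^ (-(1 : ℝ) / 2) = |H.det|⁻¹ * S.det ^ (-(1 : ℝ) / 2) := by
    rw [det_mul_mul_transpose, ← sq_abs, Real.mul_rpow (by positivity) hS,
      ← Real.rpow_natCast, ← Real.rpow_mul (abs_nonneg _)]
    norm_num [Real.rpow_neg_one]
  rw [gaussianPdf, gaussianPdf, hdiff, hquad, hdet]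
  ring

noncomputable def gaussianMeasure (n : ℕ) (μ : Fin n → ℝ) (S : Matrix (Fin n) (Fin n) ℝ) :
    Measure (Fin n → ℝ) :=
  volume.withDensity fun x => ENNReal.ofReal (gaussianPdf n μ S x)

lemma map_withDensity_comp {α β : Type*} [MeasurableSpace α] [MeasurableSpace β]
    (ν : Measure α) {T : α → β} (hT : Measurable T) {g : β → ENNReal} (hg : Measurable g) :
    (ν.withDensity (g ∘ T)).map T = (ν.map T).withDensity g := by
  ext A hA
  rw [Measure.map_apply hT hA, withDensity_apply _ (hT hA), withDensity_apply _ hA,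
    setLIntegral_map hA hg hT, Function.comp_def]

lemma map_volume_affine {n : ℕ} {H : Matrix (Fin n) (Fin n) ℝ} (hH : IsUnit H.det)
    (h : Fin n → ℝ) :
    (volume : Measure (Fin n → ℝ)).map (fun x => H *ᵥ x - h) =
      ENNReal.ofReal |H.det|⁻¹ • volume := by
  have hT : (fun x : Fin n → ℝ => H *ᵥ x - h) = (· - h) ∘ toLin' H := by
    ext x; simp
  rw [hT, ← Measure.map_map (measurable_sub_const h)
      (toLin' H).continuous_of_finiteDimensional.measurable,
    Real.map_matrix_volume_pi_eq_smul_volume_pi hH.ne_zero, Measure.map_smul,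
    map_sub_right_eq_self, abs_inv]

lemma map_affine_gaussianMeasure {n : ℕ} {H : Matrix (Fin n) (Fin n) ℝ} (hH : IsUnit H.det)
    (h μ : Fin n → ℝ) {S : Matrix (Fin n) (Fin n) ℝ} (hS : 0 ≤ S.det) :
    (gaussianMeasure n μ S).map (fun x => H *ᵥ x - h) =
      gaussianMeasure n (H *ᵥ μ - h) (H * S * Hᵀ) := by
  have hT : Measurable fun x : Fin n → ℝ => H *ᵥ x - h := by fun_prop
  have hdensity : (fun x => ENNReal.ofReal (gaussianPdf n μ S x)) =
      (ENNReal.ofReal |H.det| • fun y =>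
        ENNReal.ofReal (gaussianPdf n (H *ᵥ μ - h) (H * S * Hᵀ) y)) ∘ fun x => H *ᵥ x - h := by
    ext x
    rw [Function.comp_apply, Pi.smul_apply, smul_eq_mul, gaussianPdf_affine hH h μ hS,
      ← ENNReal.ofReal_mul (abs_nonneg _),
      mul_inv_cancel_left₀ (abs_ne_zero.mpr hH.ne_zero)]
  rw [gaussianMeasure, hdensity, map_withDensity_comp _ hT (by fun_prop), map_volume_affine hH,
    withDensity_smul_measure, withDensity_smul' _ _ ENNReal.ofReal_ne_top, smul_smul,
    ← ENNReal.ofReal_mul (by positivity), inv_mul_cancel₀ (abs_ne_zero.mpr hH.ne_zero),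
    ENNReal.ofReal_one, one_smul, gaussianMeasure]

lemma sum_smul_withDensity_ofReal {α ι : Type*} [MeasurableSpace α] [Fintype ι]
    (ν : Measure α) {w : ι → ℝ} (hw : ∀ k, 0 ≤ w k) {f : ι → α → ℝ} (hf : ∀ k x, 0 ≤ f k x)
    (hfm : ∀ k, Measurable (f k)) :
    ∑ k, ENNReal.ofReal (w k) • ν.withDensity (fun x => ENNReal.ofReal (f k x)) =
      ν.withDensity (fun x => ENNReal.ofReal (∑ k, w k * f k x)) := by
  have hdensity : (fun x => ENNReal.ofReal (∑ k, w k * f k x)) =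
      ∑' k, ENNReal.ofReal (w k) • fun x => ENNReal.ofReal (f k x) := by
    ext x
    rw [tsum_fintype, Finset.sum_apply,
      ENNReal.ofReal_sum_of_nonneg fun k _ => mul_nonneg (hw k) (hf k x)]
    simp only [Pi.smul_apply, smul_eq_mul, ENNReal.ofReal_mul (hw _)]
  rw [hdensity, withDensity_tsum fun k => (hfm k).ennreal_ofReal.const_smul _,
    Measure.sum_fintype]
  simp only [withDensity_smul' _ _ ENNReal.ofReal_ne_top]

lemma map_eq_sum_map_restrict_fiber {Ω X Y ι : Type*} [MeasurableSpace Ω] [MeasurableSpace X]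
    [MeasurableSpace Y] [Fintype ι] [MeasurableSpace ι] [MeasurableSingletonClass ι]
    (P : Measure Ω) {L : Ω → ι} (hL : Measurable L) {x : Ω → X} (hx : Measurable x)
    {g : ι → X → Y} (hg : ∀ k, Measurable (g k)) :
    P.map (fun ω => g (L ω) (x ω)) = ∑ k, ((P.restrict (L ⁻¹' {k})).map x).map (g k) := by
  have hgx : Measurable fun ω => g (L ω) (x ω) :=
    (measurable_from_prod_countable_right (f := fun p : ι × X => g p.1 p.2) hg).comp
      (hL.prodMk hx)
  ext A hA
  have hfiber : ∀ k,
      (g k ∘ x) ⁻¹' A ∩ L ⁻¹' {k} = L ⁻¹' {k} ∩ (fun ω => g (L ω) (x ω)) ⁻¹' A := by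
    intro k; ext ω
    simp only [Set.mem_inter_iff, Set.mem_preimage, Set.mem_singleton_iff, Function.comp_apply]
    constructor
    · rintro ⟨hω, rfl⟩; exact ⟨rfl, hω⟩
    · rintro ⟨rfl, hω⟩; exact ⟨hω, rfl⟩
  simp only [Measure.map_apply hgx hA, Measure.coe_finsetSum, Finset.sum_apply,
    Measure.map_map (hg _) hx, Measure.map_apply ((hg _).comp hx) hA,
    Measure.restrict_apply' (hL (measurableSet_singleton _)), hfiber,
    ← Measure.restrict_apply (hL (measurableSet_singleton _))]
  rw [sum_measure_preimage_singleton _ fun k _ => hL (measurableSet_singleton k),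
    Finset.coe_univ, Set.preimage_univ, Measure.restrict_apply_univ]

theorem gmm_steering_terminal_distribution_general (n r t : ℕ)
    {Om : Type*} [MeasurableSpace Om] (P : Measure Om)
    (p : Fin r → ℝ) (hp_pos : ∀ i, 0 < p i)
    (μ0 : Fin r → (Fin n → ℝ)) (S0 : Fin r → Matrix (Fin n) (Fin n) ℝ)
    (hS0 : ∀ i, (S0 i).PosDef)
    (lam : Fin r → Fin t → ℝ) (hlam_nonneg : ∀ i j, 0 ≤ lam i j)
    (H : Fin r → Fin t → Matrix (Fin n) (Fin n) ℝ)
    (hHinv : ∀ i j, IsUnit (H i j).det)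
    (h : Fin r → Fin t → (Fin n → ℝ))
    (μf : Fin t → (Fin n → ℝ)) (Sf : Fin t → Matrix (Fin n) (Fin n) ℝ)
    (hμf : ∀ i j, (H i j).mulVec (μ0 i) - h i j = μf j)
    (hSf : ∀ i j, H i j * S0 i * (H i j)ᵀ = Sf j)
    (I : Om → Fin r) (J : Om → Fin t) (x0 : Om → (Fin n → ℝ))
    (hx0 : Measurable x0) (hI : Measurable I) (hJ : Measurable J)
    (hjoint : ∀ (i : Fin r) (j : Fin t) (A : Set (Fin n → ℝ)), MeasurableSet A →
      P {ω | I ω = i ∧ J ω = j ∧ x0 ω ∈ A} =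
        ENNReal.ofReal (p i * lam i j) *
          ∫⁻ x in A, ENNReal.ofReal (gaussianPdf n (μ0 i) (S0 i) x))
    (xN : Om → (Fin n → ℝ))
    (hxN : ∀ ω, xN ω = (H (I ω) (J ω)).mulVec (x0 ω) - h (I ω) (J ω)) :
    P.map xN = volume.withDensity (fun x => ENNReal.ofReal
      (∑ j, (∑ i, p i * lam i j) * gaussianPdf n (μf j) (Sf j) x)) := by
  have hdetSf : ∀ i j, 0 ≤ (Sf j).det := fun i j => by
    rw [← hSf i j, det_mul_mul_transpose]
    exact mul_nonneg (sq_nonneg _) (hS0 i).det_pos.le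
  have hcomponent : ∀ q : Fin r × Fin t, (P.restrict ((fun ω => (I ω, J ω)) ⁻¹' {q})).map x0 =
      ENNReal.ofReal (p q.1 * lam q.1 q.2) • gaussianMeasure n (μ0 q.1) (S0 q.1) := by
    rintro ⟨i, j⟩
    ext A hA
    rw [Measure.map_apply hx0 hA, Measure.restrict_apply (hx0 hA), Measure.smul_apply,
      gaussianMeasure, withDensity_apply _ hA, smul_eq_mul, ← hjoint i j A hA]
    congr 1
    ext ω
    simp only [Set.mem_inter_iff, Set.mem_preimage, Set.mem_singleton_iff, Prod.mk.injEq,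
      Set.mem_ofPred_eq]
    exact and_rotate
  calc P.map xN
      = ∑ q : Fin r × Fin t, ((P.restrict ((fun ω => (I ω, J ω)) ⁻¹' {q})).map x0).map
          (fun x => H q.1 q.2 *ᵥ x - h q.1 q.2) := by
        rw [funext hxN]
        exact map_eq_sum_map_restrict_fiber P (hI.prodMk hJ) hx0
          (g := fun q x => H q.1 q.2 *ᵥ x - h q.1 q.2) fun q => by fun_prop
    _ = ∑ q : Fin r × Fin t,
          ENNReal.ofReal (p q.1 * lam q.1 q.2) • gaussianMeasure n (μf q.2) (Sf q.2) := by
        refine Finset.sum_congr rfl fun q _ => ?_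
        rw [hcomponent, Measure.map_smul,
          map_affine_gaussianMeasure (hHinv _ _) _ _ (hS0 _).det_pos.le, hμf, hSf]
    _ = volume.withDensity fun x => ENNReal.ofReal
          (∑ q : Fin r × Fin t, p q.1 * lam q.1 q.2 * gaussianPdf n (μf q.2) (Sf q.2) x) := by
        unfold gaussianMeasure
        exact sum_smul_withDensity_ofReal volume
          (fun q : Fin r × Fin t => mul_nonneg (hp_pos q.1).le (hlam_nonneg q.1 q.2))
          (fun q : Fin r × Fin t => gaussianPdf_nonneg _ (hdetSf q.1 q.2))
          (fun q => (continuous_gaussianPdf _ _ _).measurable)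
    _ = _ := by simp only [Fintype.sum_prod_type_right, Finset.sum_mul]

/-- Proposition 3 of the paper: under the randomized affine policy, a Gaussian
mixture initial state is steered to the Gaussian mixture with weights
`q_j = ∑ᵢ pᵢ λ_{i,j}` and components `(μⱼᶠ, Σⱼᶠ)`. -/
theorem gmm_steering_terminal_distribution (n r t : ℕ)
    {Om : Type*} [MeasurableSpace Om] (P : Measure Om) [IsProbabilityMeasure P]
    (p : Fin r → ℝ) (hp_pos : ∀ i, 0 < p i) (hp_sum : ∑ i, p i = 1)
    (μ0 : Fin r → (Fin n → ℝ)) (S0 : Fin r → Matrix (Fin n) (Fin n) ℝ)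
    (hS0 : ∀ i, (S0 i).PosDef)
    (lam : Fin r → Fin t → ℝ) (hlam_nonneg : ∀ i j, 0 ≤ lam i j)
    (hlam_sum : ∀ i, ∑ j, lam i j = 1)
    (H : Fin r → Fin t → Matrix (Fin n) (Fin n) ℝ)
    (hHinv : ∀ i j, IsUnit (H i j).det)
    (h : Fin r → Fin t → (Fin n → ℝ))
    (μf : Fin t → (Fin n → ℝ)) (Sf : Fin t → Matrix (Fin n) (Fin n) ℝ)
    (hμf : ∀ i j, (H i j).mulVec (μ0 i) - h i j = μf j)
    (hSf : ∀ i j, H i j * S0 i * (H i j)ᵀ = Sf j)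
    (I : Om → Fin r) (J : Om → Fin t) (x0 : Om → (Fin n → ℝ))
    (hx0 : Measurable x0) (hI : Measurable I) (hJ : Measurable J)
    (hjoint : ∀ (i : Fin r) (j : Fin t) (A : Set (Fin n → ℝ)), MeasurableSet A →
      P {ω | I ω = i ∧ J ω = j ∧ x0 ω ∈ A} =
        ENNReal.ofReal (p i * lam i j) *
          ∫⁻ x in A, ENNReal.ofReal (gaussianPdf n (μ0 i) (S0 i) x))
    (xN : Om → (Fin n → ℝ))
    (hxN : ∀ ω, xN ω = (H (I ω) (J ω)).mulVec (x0 ω) - h (I ω) (J ω)) :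
    P.map xN = volume.withDensity (fun x => ENNReal.ofReal
      (∑ j, (∑ i, p i * lam i j) * gaussianPdf n (μf j) (Sf j) x)) :=
  gmm_steering_terminal_distribution_general n r t P p hp_pos μ0 S0 hS0 lam hlam_nonneg H hHinv h μf
    Sf hμf hSf I J x0 hx0 hI hJ hjoint xN hxN
end

section
/- Suppose G ∈ ℝ^{n×n} is invertible and B ∈ ℝ^{n×mN} satisfies B Bᵀ = G, and let Σ_0, Σ_d be positive definite and Φ ∈ ℝ^{n×n} arbitrary. For any orthogonal T ∈ ℝ^{n×n} and any Z ∈ ℝ^{(mN−n)×n}, define L = Bᵀ G^{-1}(Σ_d^{1/2} T Σ_0^{-1/2} − Φ) + D Z, where D ∈ ℝ^{mN×(mN−n)} satisfies B D = 0. Then L satisfies the terminal covariance constraint (Φ + B L) Σ_0 (Φ + B L)ᵀ = Σ_d. -/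
open Matrix

open scoped ComplexOrder in
/-- The positive semidefinite square root of a positive semidefinite matrix
(the definition Mathlib had under this name, removed since). -/
noncomputable def Matrix.PosSemidef.sqrt {𝕜 : Type*} [RCLike 𝕜] {n : Type*} [Fintype n]
    [DecidableEq n] {A : Matrix n n 𝕜} (hA : A.PosSemidef) : Matrix n n 𝕜 :=
  (hA.1.eigenvectorUnitary : Matrix n n 𝕜) *
    diagonal (fun i => ((√(hA.1.eigenvalues i) : ℝ) : 𝕜)) *
    (star hA.1.eigenvectorUnitary : Matrix n n 𝕜)

open scoped ComplexOrder in
theorem Matrix.PosSemidef.sqrt_mul_self {𝕜 : Type*} [RCLike 𝕜] {n : Type*} [Fintype n]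
    [DecidableEq n] {A : Matrix n n 𝕜} (hA : A.PosSemidef) : hA.sqrt * hA.sqrt = A := by
  unfold Matrix.PosSemidef.sqrt
  have hs := hA.1.spectral_theorem
  rw [Unitary.conjStarAlgAut_apply] at hs
  have hU : (star hA.1.eigenvectorUnitary : Matrix n n 𝕜) * (hA.1.eigenvectorUnitary : Matrix n n 𝕜) = 1 :=
    Unitary.coe_star_mul_self _
  set U : Matrix n n 𝕜 := (hA.1.eigenvectorUnitary : Matrix n n 𝕜) with hUdef
  have hD : (diagonal fun i => ((√(hA.1.eigenvalues i) : ℝ) : 𝕜)) *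
      (diagonal fun i => ((√(hA.1.eigenvalues i) : ℝ) : 𝕜)) = diagonal (RCLike.ofReal ∘ hA.1.eigenvalues) := by
    rw [diagonal_mul_diagonal]
    congr 1
    funext i
    simp only [Function.comp_apply, ← RCLike.ofReal_mul, Real.mul_self_sqrt (hA.eigenvalues_nonneg i)]
  calc U * (diagonal fun i => ((√(hA.1.eigenvalues i) : ℝ) : 𝕜)) * star U *
        (U * (diagonal fun i => ((√(hA.1.eigenvalues i) : ℝ) : 𝕜)) * star U)
      = U * ((diagonal fun i => ((√(hA.1.eigenvalues i) : ℝ) : 𝕜)) * (star U * U) *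
        (diagonal fun i => ((√(hA.1.eigenvalues i) : ℝ) : 𝕜))) * star U := by
        simp only [Matrix.mul_assoc]
    _ = A := by rw [hU, Matrix.mul_one, hD, ← hs]

open scoped ComplexOrder in
theorem Matrix.PosSemidef.sqrt_isHermitian {𝕜 : Type*} [RCLike 𝕜] {n : Type*} [Fintype n]
    [DecidableEq n] {A : Matrix n n 𝕜} (hA : A.PosSemidef) : hA.sqrt.IsHermitian := by
  unfold Matrix.PosSemidef.sqrt IsHermitian
  have hD : (star fun i => ((√(hA.1.eigenvalues i) : ℝ) : 𝕜)) = fun i => ((√(hA.1.eigenvalues i) : ℝ) : 𝕜) := by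
    funext i
    simp
  rw [conjTranspose_mul, conjTranspose_mul, diagonal_conjTranspose, hD]
  simp only [Unitary.coe_star, star_eq_conjTranspose, conjTranspose_conjTranspose, Matrix.mul_assoc]

/-- Every gain of the form `L = Bᵀ G⁻¹ (Σ_d^{1/2} T Σ₀^{-1/2} - Φ) + D Z` with
`T` orthogonal satisfies the terminal covariance constraint
`(Φ + B L) Σ₀ (Φ + B L)ᵀ = Σ_d`. -/
theorem parametrized_gain_satisfies_covariance_constraint (n mN q : ℕ)
    (G : Matrix (Fin n) (Fin n) ℝ) (hG : IsUnit G.det)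
    (B : Matrix (Fin n) (Fin mN) ℝ) (hBG : B * Bᵀ = G)
    (S0 Sd : Matrix (Fin n) (Fin n) ℝ) (hS0 : S0.PosDef) (hSd : Sd.PosDef)
    (Phi : Matrix (Fin n) (Fin n) ℝ)
    (T : Matrix (Fin n) (Fin n) ℝ) (hT : T * Tᵀ = 1)
    (D : Matrix (Fin mN) (Fin q) ℝ) (hBD : B * D = 0)
    (Z : Matrix (Fin q) (Fin n) ℝ)
    (L : Matrix (Fin mN) (Fin n) ℝ)
    (hL : L = Bᵀ * G⁻¹ * (hSd.posSemidef.sqrt * T * (hS0.posSemidef.sqrt)⁻¹ - Phi)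
      + D * Z) :
    (Phi + B * L) * S0 * (Phi + B * L)ᵀ = Sd := by
  set R0 := hS0.posSemidef.sqrt with hR0
  set Rd := hSd.posSemidef.sqrt with hRd
  have hR0sq : R0 * R0 = S0 := hS0.posSemidef.sqrt_mul_self
  have hRdsq : Rd * Rd = Sd := hSd.posSemidef.sqrt_mul_self
  have hR0sym : R0ᵀ = R0 := by
    have h := hS0.posSemidef.sqrt_isHermitian
    rwa [IsHermitian, conjTranspose_eq_transpose_of_trivial] at h
  have hRdsym : Rdᵀ = Rd := by
    have h := hSd.posSemidef.sqrt_isHermitian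
    rwa [IsHermitian, conjTranspose_eq_transpose_of_trivial] at h
  have hR0det : IsUnit R0.det := by
    have : R0.det * R0.det = S0.det := by rw [← det_mul, hR0sq]
    have h0 : S0.det ≠ 0 := ne_of_gt hS0.det_pos
    exact isUnit_iff_ne_zero.mpr (fun h => h0 (by rw [← this, h, zero_mul]))
  have hBL : Phi + B * L = Rd * T * R0⁻¹ := by
    rw [hL]
    rw [Matrix.mul_add, ← Matrix.mul_assoc B D Z, hBD, Matrix.zero_mul, add_zero,
      ← Matrix.mul_assoc, ← Matrix.mul_assoc, hBG,
      Matrix.mul_nonsing_inv _ hG, Matrix.one_mul]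
    abel
  rw [hBL]
  have hinv : R0⁻¹ * S0 * (R0⁻¹)ᵀ = 1 := by
    rw [transpose_nonsing_inv, hR0sym, ← hR0sq, ← Matrix.mul_assoc,
      Matrix.nonsing_inv_mul _ hR0det, Matrix.one_mul, Matrix.mul_nonsing_inv _ hR0det]
  calc Rd * T * R0⁻¹ * S0 * (Rd * T * R0⁻¹)ᵀ
      = Rd * T * (R0⁻¹ * S0 * (R0⁻¹)ᵀ) * Tᵀ * Rdᵀ := by
        simp only [transpose_mul, Matrix.mul_assoc]
    _ = Sd := by rw [hinv, Matrix.mul_one, Matrix.mul_assoc Rd T, hT, Matrix.mul_one, hRdsym, hRdsq]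
end
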